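/- arXiv:1310.3812 — 3 statements merged into one kernel-verified Lean document; each statement's English description precedes it below -/
import Mathlib

section
/- Let k be a positive integer. There exists a unique sequence (a_j)_{j≥1} of rational numbers such that exp(−Σ_{j≥1} a_j x^{j+1} d/dx) · x = ((1+x)^k − 1)/k in ℚ[[x]], where the exponential of the derivation is applied to the power series x (the action is well defined since each operator x^{j+1} d/dx strictly increases the order of a power series with zero constant term). -/
/-!
The coefficients of `x^0` and `x^1` in `exp(−D)·x` are always `0` and `1`, and the coefficient
of `x^(n+2)` is `−a n` (from the term `m = 1`) plus terms with `m ≥ 2`, which only involve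
`a 0, …, a (n-1)`. Hence every `G = x + O(x²)` equals `exp(−D)·x` for exactly one sequence,
obtained by solving for `a_n` recursively; `((1+x)^k − 1)/k` is such a `G` as soon as `k ≠ 0`.
-/

noncomputable section

open PowerSeries

/-- Formal derivative `d/dx` on `ℚ[[x]]`, coefficientwise. -/
def pderiv (f : PowerSeries ℚ) : PowerSeries ℚ :=
  PowerSeries.mk fun n => (n + 1 : ℚ) * PowerSeries.coeff (R := ℚ) (n + 1) f

/-- The power series `Σ_{j≥1} a_j x^{j+1}`, where `a i` encodes the coefficient `a_{i+1}`. -/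
def coefSeries (a : ℕ → ℚ) : PowerSeries ℚ :=
  PowerSeries.mk fun n => if 2 ≤ n then a (n - 2) else 0

/-- The derivation `D = Σ_{j≥1} a_j x^{j+1} d/dx` acting on `ℚ[[x]]`. -/
def Dop (a : ℕ → ℚ) (f : PowerSeries ℚ) : PowerSeries ℚ :=
  coefSeries a * pderiv f

/-- `exp(−Σ_{j≥1} a_j x^{j+1} d/dx) · x = Σ_{m≥0} (−D)^m(x)/m!`.
Since each `x^{j+1} d/dx` strictly increases the order of a series with zero constant
term, `D^m(x)` has order `≥ m + 1`, so the coefficient of `x^n` only receives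
contributions from `m ≤ n`; the truncated sum below is therefore the honest
`(x)`-adically convergent sum. -/
def expNegD (a : ℕ → ℚ) : PowerSeries ℚ :=
  PowerSeries.mk fun n =>
    ∑ m ∈ Finset.range (n + 1),
      ((-1 : ℚ) ^ m / m.factorial) * PowerSeries.coeff (R := ℚ) n ((Dop a)^[m] PowerSeries.X)

open Finset.HasAntidiagonal

lemma coeff_pderiv (f : PowerSeries ℚ) (n : ℕ) :
    coeff n (pderiv f) = (n + 1) * coeff (n + 1) f :=
  coeff_mk _ _

lemma coeff_coefSeries (a : ℕ → ℚ) (n : ℕ) :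
    coeff n (coefSeries a) = if 2 ≤ n then a (n - 2) else 0 :=
  coeff_mk _ _

lemma pderiv_X : pderiv (X : PowerSeries ℚ) = 1 := by
  ext (_ | _) <;> simp [coeff_pderiv, coeff_X, coeff_one]

lemma Dop_X (a : ℕ → ℚ) : Dop a X = coefSeries a := by
  rw [Dop, pderiv_X, mul_one]

lemma coeff_Dop (a : ℕ → ℚ) (f : PowerSeries ℚ) (n : ℕ) :
    coeff n (Dop a f) = ∑ p ∈ antidiagonal n,
      (if 2 ≤ p.1 then a (p.1 - 2) else 0) * ((p.2 + 1) * coeff (p.2 + 1) f) := by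
  simp only [Dop, coeff_mul, coeff_coefSeries, coeff_pderiv]

/-- `coefSeries a` has order `≥ 2` and `pderiv` lowers the order by one, so each application of
`Dop a` raises it. -/
lemma coeff_Dop_iterate_X_of_le (a : ℕ → ℚ) {m n : ℕ} (h : n ≤ m) :
    coeff n ((Dop a)^[m] X) = 0 := by
  induction m generalizing n with
  | zero => simp [Nat.le_zero.mp h]
  | succ m ih =>
    rw [Function.iterate_succ_apply', coeff_Dop]
    refine Finset.sum_eq_zero fun p hp => ?_
    rw [mem_antidiagonal] at hp
    split_ifs with h2
    · rw [ih (by omega), mul_zero, mul_zero]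
    · rw [zero_mul]

/-- In `coeff n ((Dop a)^[m] X)` the value `a j` can only occur when `j + m + 1 ≤ n`. -/
lemma coeff_Dop_iterate_X_congr {a b : ℕ → ℚ} {J : ℕ} (hab : ∀ j < J, a j = b j)
    {m n : ℕ} (h : n ≤ J + m) :
    coeff n ((Dop a)^[m] X) = coeff n ((Dop b)^[m] X) := by
  induction m generalizing n with
  | zero => rfl
  | succ m ih =>
    simp only [Function.iterate_succ_apply', coeff_Dop]
    refine Finset.sum_congr rfl fun p hp => ?_
    rw [mem_antidiagonal] at hp
    split_ifs with h2
    · rcases le_or_gt (p.2 + 1) m with hl | hl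
      · simp only [coeff_Dop_iterate_X_of_le _ hl, mul_zero]
      · rw [ih (by omega), hab _ (by omega)]
    · rw [zero_mul, zero_mul]

def expNegDTail (a : ℕ → ℚ) (n : ℕ) : ℚ :=
  ∑ m ∈ Finset.Ico 2 (n + 3), ((-1 : ℚ) ^ m / m.factorial) * coeff (n + 2) ((Dop a)^[m] X)

lemma expNegDTail_congr {a b : ℕ → ℚ} {n : ℕ} (h : ∀ j < n, a j = b j) :
    expNegDTail a n = expNegDTail b n :=
  Finset.sum_congr rfl fun m hm => by
    rw [coeff_Dop_iterate_X_congr h (by simp at hm; omega)]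

lemma coeff_expNegD_zero (a : ℕ → ℚ) : coeff 0 (expNegD a) = 0 := by
  simp [expNegD]

lemma coeff_expNegD_one (a : ℕ → ℚ) : coeff 1 (expNegD a) = 1 := by
  simp [expNegD, Finset.sum_range_succ, Dop_X, coeff_coefSeries]

lemma coeff_expNegD_add_two (a : ℕ → ℚ) (n : ℕ) :
    coeff (n + 2) (expNegD a) = -a n + expNegDTail a n := by
  rw [expNegD, coeff_mk, Finset.range_eq_Ico,
    ← Finset.sum_Ico_consecutive _ (Nat.zero_le 2) (by omega : 2 ≤ n + 3)]
  simp [expNegDTail, Finset.sum_range_succ, Dop_X, coeff_coefSeries, coeff_X]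

lemma existsUnique_forall_eq_of_congr_prefix {α : Type*} [Inhabited α] (F : (ℕ → α) → ℕ → α)
    (hF : ∀ a b n, (∀ j < n, a j = b j) → F a n = F b n) :
    ∃! a : ℕ → α, ∀ n, a n = F a n := by
  let a : ℕ → α := Nat.strongRec fun n rec => F (fun j => if h : j < n then rec j h else default) n
  have ha : ∀ n, a n = F a n := fun n =>
    (Nat.strongRec_eq _ n).trans (hF _ _ n fun j hj => dif_pos hj)
  refine ⟨a, ha, fun b hb => funext fun n => ?_⟩
  induction n using Nat.strong_induction_on with
  | _ n ih => rw [hb n, ha n, hF _ _ n ih]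

theorem existsUnique_expNegD_eq (G : PowerSeries ℚ) (h0 : coeff 0 G = 0) (h1 : coeff 1 G = 1) :
    ∃! a : ℕ → ℚ, expNegD a = G := by
  have hiff : ∀ a, expNegD a = G ↔ ∀ n, a n = expNegDTail a n - coeff (n + 2) G := by
    intro a
    refine ⟨fun h n => ?_, fun h => ?_⟩
    · linarith [coeff_expNegD_add_two a n, congrArg (coeff (n + 2)) h]
    · ext (_ | _ | n)
      · rw [coeff_expNegD_zero, h0]
      · rw [coeff_expNegD_one, h1]
      · rw [coeff_expNegD_add_two, h n]; ring
  simp only [hiff]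
  exact existsUnique_forall_eq_of_congr_prefix _ fun a b n h => by rw [expNegDTail_congr h]

/-- for each positive integer `k` there exists a unique sequence
`(a_j)_{j≥1}` of rationals (encoded as `a : ℕ → ℚ` with `a i = a_{i+1}`) such that
`exp(−Σ_{j≥1} a_j x^{j+1} d/dx) · x = ((1+x)^k − 1)/k` in `ℚ[[x]]`. -/
theorem stmt2 (k : ℕ) (hk : 0 < k) :
    ∃! a : ℕ → ℚ,
      expNegD a = PowerSeries.C (R := ℚ) (1 / k) * ((1 + PowerSeries.X) ^ k - 1) := by
  have hk' : (k : ℚ) ≠ 0 := by positivity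
  apply existsUnique_expNegD_eq
  · simp
  · simp [coeff_one_pow, hk']
end
end

section
/- Let k be a positive integer. The delta function identity x_2^{−1} δ((x_1 − x_0)^{1/k} / x_2^{1/k}) = x_1^{−1} δ((x_2 + x_0)^{1/k} / x_1^{1/k}) holds, where δ(y^{1/k}/z^{1/k}) := Σ_{m∈(1/k)ℤ} y^m z^{−m}, and fractional powers (x_1 − x_0)^m, (x_2 + x_0)^m for m ∈ (1/k)ℤ are expanded as binomial series in nonnegative powers of x_0. -/
/-! Each side has at most one nonzero term: on the left the exponent `s/k` of `x₁ − x₀` is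
`r = (b + kj)/k`, on the right the exponent of `x₂ + x₀` is `(−b − k)/k = j − r − 1`, and the two
coefficients agree by upper negation, `C(j − r − 1, j) = (−1)^j C(r, j)`. -/

noncomputable section

/-- Generalized binomial coefficient `C(r, n) = r(r-1)⋯(r-n+1)/n!` for `r : ℚ`. -/
def qchoose (r : ℚ) (n : ℕ) : ℚ :=
  (∏ i ∈ Finset.range n, (r - i)) / n.factorial

theorem qchoose_natCast_sub_sub_one (r : ℚ) (j : ℕ) :
    qchoose (j - r - 1) j = (-1) ^ j * qchoose r j := by
  have hprod : ∏ i ∈ Finset.range j, ((j : ℚ) - r - 1 - i)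
      = (-1) ^ j * ∏ i ∈ Finset.range j, (r - i) := by
    calc ∏ i ∈ Finset.range j, ((j : ℚ) - r - 1 - i)
        = ∏ i ∈ Finset.range j, -(r - i) := by
          refine (Finset.prod_range_reflect _ j).symm.trans (Finset.prod_congr rfl fun i hi => ?_)
          rw [Finset.mem_range] at hi
          rw [Nat.cast_sub (by omega), Nat.cast_sub (by omega)]
          push_cast
          ring
      _ = (-1) ^ j * ∏ i ∈ Finset.range j, (r - i) := by
          rw [Finset.prod_neg, Finset.card_range]
  rw [qchoose, qchoose, hprod, mul_div_assoc]

/-- The exponents of `x₁`, `x₂` are encoded by integers: `b` stands for `x₁^{b/k}` and `c` for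
`x₂^{c/k}`. Both sides are the coefficient of `x₀^j x₁^{b/k} x₂^{c/k}`, the left one in
`Σ_{s∈ℤ} (x₁−x₀)^{s/k} x₂^{−s/k−1}`, the right one in `Σ_{s∈ℤ} (x₂+x₀)^{s/k} x₁^{−s/k−1}`. -/
theorem stmt7 (k : ℕ) (hk : 0 < k) (j : ℕ) (b c : ℤ) :
    (∑ᶠ s : ℤ, if b = s - k * j ∧ c = -s - k
        then (-1 : ℚ) ^ j * qchoose ((s : ℚ) / k) j else 0)
    = ∑ᶠ s : ℤ, if b = -s - k ∧ c = s - k * j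
        then qchoose ((s : ℚ) / k) j else 0 := by
  rw [finsum_eq_single _ (b + k * j) fun s hs => if_neg fun h => hs (by omega),
    finsum_eq_single _ (-b - k) fun s hs => if_neg fun h => hs (by omega)]
  by_cases hc : c = -b - k * j - k
  · have hexp : ((-b - k : ℤ) : ℚ) / k = j - ((b + k * j : ℤ) : ℚ) / k - 1 := by
      push_cast
      field_simp
      ring
    rw [if_pos ⟨by ring, by omega⟩, if_pos ⟨by ring, by omega⟩, hexp,
      qchoose_natCast_sub_sub_one]
  · rw [if_neg (by omega), if_neg (by omega)]
end
end

section
/- Formal residue change of variables: let R be a commutative ℚ-algebra, let f(x) ∈ R((x)) be a formal Laurent series, and let h(z_0) ∈ z_0 R[[z_0]] be a formal power series with zero constant term whose linear coefficient is invertible in R. Then the composition f(h(z_0)) is a well-defined element of R((z_0)) and Res_x f(x) = Res_{z_0} ( h'(z_0) · f(h(z_0)) ), where Res denotes the coefficient of the (−1)-st power of the variable. -/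
/-!
Write `h = X u` with `u` a unit power series. Then `h'(z₀) H^n` has residue zero for `n ≥ 0`
(it is a power series), residue one for `n = -1` (as `h'/h = 1/z₀ + u'/u`), and residue zero for
`n = -(k+1)` with `k ≥ 1`, because there `k h' H^n = -(H^{-k})'` is a derivative; cancelling `k`
is where the `ℚ`-algebra structure enters. Hence the sum collapses to `f_{-1}`.
-/

open PowerSeries HahnSeries

noncomputable section

namespace PowerSeries

variable {R : Type*} [CommRing R]

lemma derivative_inv_pow_succ (u : R⟦X⟧ˣ) (k : ℕ) :
    d⁄dX R ((↑u⁻¹ : R⟦X⟧) ^ (k + 1)) = -((k + 1) • (d⁄dX R u * (↑u⁻¹ : R⟦X⟧) ^ (k + 2))) := by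
  rw [derivative_pow, derivative_inv, nsmul_eq_mul]
  push_cast
  ring

lemma derivative_X_mul_mul_inv_pow_succ (u : R⟦X⟧ˣ) (k : ℕ) :
    d⁄dX R (X * (u : R⟦X⟧)) * (↑u⁻¹ : R⟦X⟧) ^ (k + 1) =
      X * (d⁄dX R u * (↑u⁻¹ : R⟦X⟧) ^ (k + 1)) + (↑u⁻¹ : R⟦X⟧) ^ k := by
  rw [Derivation.leibniz, derivative_X, smul_eq_mul, smul_eq_mul]
  linear_combination (↑u⁻¹ : R⟦X⟧) ^ k * u.mul_inv

lemma coeff_derivative_X_mul_mul_inv_pow_succ [IsAddTorsionFree R] (u : R⟦X⟧ˣ) (k : ℕ) :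
    coeff k (d⁄dX R (X * (u : R⟦X⟧)) * (↑u⁻¹ : R⟦X⟧) ^ (k + 1)) = if k = 0 then 1 else 0 := by
  rw [derivative_X_mul_mul_inv_pow_succ]
  rcases k with _ | j
  · simp
  · have hder := congrArg (coeff j) (derivative_inv_pow_succ u j)
    rw [coeff_derivative, map_neg, map_nsmul] at hder
    rw [if_neg j.succ_ne_zero, map_add, coeff_succ_X_mul,
      ← nsmul_eq_zero_iff_right j.succ_ne_zero, smul_add]
    simp only [nsmul_eq_mul, Nat.cast_succ] at hder ⊢
    linear_combination hder

end PowerSeries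

namespace LaurentSeries

variable {R : Type*} [CommRing R]

def unitX : (LaurentSeries R)ˣ where
  val := single 1 1
  inv := single (-1) 1
  val_inv := by rw [single_mul_single, add_neg_cancel, mul_one, single_zero_one]
  inv_val := by rw [single_mul_single, neg_add_cancel, mul_one, single_zero_one]

lemma val_unitX_zpow (n : ℤ) :
    ((unitX ^ n : (LaurentSeries R)ˣ) : LaurentSeries R) = single n 1 := by
  rcases n with k | k
  · rw [Int.ofNat_eq_natCast, zpow_natCast, Units.val_pow_eq_pow_val]
    exact (single_pow _ _ _).trans (by simp)
  · rw [zpow_negSucc, ← inv_pow, Units.val_pow_eq_pow_val]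
    exact (single_pow _ _ _).trans (by simp [Int.negSucc_eq])

def unitXMul (u : R⟦X⟧ˣ) : (LaurentSeries R)ˣ :=
  unitX * Units.map (ofPowerSeries ℤ R : R⟦X⟧ →* LaurentSeries R) u

lemma val_unitXMul (u : R⟦X⟧ˣ) :
    (unitXMul u : LaurentSeries R) = ofPowerSeries ℤ R (X * (u : R⟦X⟧)) := by
  rw [map_mul, ofPowerSeries_X]
  rfl

lemma val_unitXMul_zpow (u : R⟦X⟧ˣ) (n : ℤ) :
    ((unitXMul u ^ n : (LaurentSeries R)ˣ) : LaurentSeries R) =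
      single n 1 * ofPowerSeries ℤ R ↑(u ^ n) := by
  rw [unitXMul, mul_zpow, Units.val_mul, val_unitX_zpow, ← map_zpow]
  rfl

theorem coeff_neg_one_derivative_mul_unitXMul_zpow [IsAddTorsionFree R] (u : R⟦X⟧ˣ) (n : ℤ) :
    (ofPowerSeries ℤ R (d⁄dX R (X * (u : R⟦X⟧))) *
      ((unitXMul u ^ n : (LaurentSeries R)ˣ) : LaurentSeries R)).coeff (-1) =
      if n = -1 then 1 else 0 := by
  rw [val_unitXMul_zpow, mul_left_comm, coeff_single_mul, one_mul, ← map_mul,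
    PowerSeries.coeff_coe]
  rcases n with k | k
  · rw [Int.ofNat_eq_natCast, if_pos (by omega), if_neg (by omega)]
  · rw [if_neg (by omega), zpow_negSucc, ← inv_pow, Units.val_pow_eq_pow_val,
      show (-1 - Int.negSucc k).natAbs = k by omega, coeff_derivative_X_mul_mul_inv_pow_succ]
    simp [Int.negSucc_eq]

end LaurentSeries

/-- formal residue change of variables: let `R` be a commutative
`ℚ`-algebra, `f ∈ R((x))` a formal Laurent series, and `h ∈ z₀ R[[z₀]]` a power series
with zero constant term and invertible linear coefficient.  Then `h`, viewed inside
`R((z₀))`, is invertible (this is the unit `H`, via which the composition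
`f(h(z₀)) = Σ_n f_n H^n` is well defined term by term), and
`Res_x f(x) = Res_{z₀} (h'(z₀) · f(h(z₀)))`; by linearity the right-hand residue is
`Σ_n f_n · Res_{z₀}(h'(z₀) H^n)`, which is how it is written below
(`Res` is the coefficient of the `(−1)`-st power). -/
theorem stmt8 (R : Type) [CommRing R] [Algebra ℚ R]
    (f : LaurentSeries R) (h : PowerSeries R)
    (h0 : PowerSeries.constantCoeff h = 0)
    (h1 : IsUnit (PowerSeries.coeff 1 h)) :
    ∃ H : (LaurentSeries R)ˣ,
      (H : LaurentSeries R) = HahnSeries.ofPowerSeries ℤ R h ∧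
      f.coeff (-1) = ∑ᶠ n : ℤ, f.coeff n *
        ((HahnSeries.ofPowerSeries ℤ R
            (PowerSeries.mk fun m => (m + 1 : ℕ) * PowerSeries.coeff (m + 1) h)) *
          ((H ^ n : (LaurentSeries R)ˣ) : LaurentSeries R)).coeff (-1) := by
  have : IsAddTorsionFree R := .of_module_rat R
  have hderiv : PowerSeries.mk (fun m => ((m + 1 : ℕ) : R) * PowerSeries.coeff (m + 1) h) =
      d⁄dX R h := by
    ext m
    rw [coeff_mk, coeff_derivative]
    push_cast
    ring
  obtain ⟨u, rfl⟩ : X ∣ h := X_dvd_iff.mpr h0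
  lift u to R⟦X⟧ˣ using isUnit_iff_constantCoeff.mpr (by
    rwa [← coeff_zero_eq_constantCoeff_apply, ← coeff_succ_X_mul])
  refine ⟨LaurentSeries.unitXMul u, LaurentSeries.val_unitXMul u, ?_⟩
  simp_rw [hderiv, LaurentSeries.coeff_neg_one_derivative_mul_unitXMul_zpow, mul_ite, mul_one,
    mul_zero]
  rw [finsum_eq_single _ (-1) fun n hn => if_neg hn, if_pos rfl]
end
end
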